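/- For every Δ ∈ ℕ, every β ≥ 0 and all reals h₁ < h₂, there exists ε > 0, depending only on Δ, β, h₁, h₂, such that for every finite graph G = (V,E) of maximum degree at most Δ one has μ^{β,h₁} ≼ (μ^{β,h₂})^{(-,ε)}, where μ^{β,h} denotes the Ising measure on G with constant external field h. -/

import Mathlib

/-!
Ising model on a finite graph. Spin configurations are `σ : V → Bool`, with `true`
standing for spin `+1` and `false` for spin `-1`; `spin` is the corresponding `±1` value.
Probability measures on the finite configuration space are represented by weight functions.
-/

open Finset

/-- The `±1` value of a spin. -/
def spin (b : Bool) : ℝ := if b then 1 else -1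

/-- The conditional probability `μ(σ(s) = +1 | σ ≡ ξ off s)`. -/
noncomputable def condOne {V : Type*} [DecidableEq V] [Fintype V]
    (μ : (V → Bool) → ℝ) (s : V) (ξ : V → Bool) : ℝ :=
  μ (Function.update ξ s true) /
    (μ (Function.update ξ s true) + μ (Function.update ξ s false))

/-- The interaction energy `σ(t)σ(t')` of an (unordered) edge. -/
def edgeTerm {V : Type*} (σ : V → Bool) : Sym2 V → ℝ :=
  Sym2.lift ⟨fun a b => spin (σ a) * spin (σ b), fun a b => by ring⟩

/-- The Ising Hamiltonian `H(σ) = -β ∑_{{t,t'} ∈ E} σ(t)σ(t') - ∑_t h(t) σ(t)`. -/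
noncomputable def isingH {V : Type*} [DecidableEq V] [Fintype V]
    (G : SimpleGraph V) [DecidableRel G.Adj] (β : ℝ) (h : V → ℝ) (σ : V → Bool) : ℝ :=
  -β * ∑ e ∈ G.edgeFinset, edgeTerm σ e - ∑ t : V, h t * spin (σ t)

/-- The Ising measure `μ^{β,h}(σ) = e^{-H(σ)}/Z` on `{-1,+1}^V`. -/
noncomputable def isingWeight {V : Type*} [DecidableEq V] [Fintype V]
    (G : SimpleGraph V) [DecidableRel G.Adj] (β : ℝ) (h : V → ℝ) (σ : V → Bool) : ℝ :=
  Real.exp (-isingH G β h σ) / ∑ τ : V → Bool, Real.exp (-isingH G β h τ)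

/-- Stochastic domination `μ ≼ ν` for weight functions: `∑ f dμ ≤ ∑ f dν` for every
nondecreasing `f` (coordinatewise order, with `false < true`, i.e. `-1 < +1`). -/
def Dominates {V : Type*} [DecidableEq V] [Fintype V] (μ ν : (V → Bool) → ℝ) : Prop :=
  ∀ f : (V → Bool) → ℝ, Monotone f →
    ∑ σ : V → Bool, μ σ * f σ ≤ ∑ σ : V → Bool, ν σ * f σ

/-- The weight function of `μ^{(-,ε)}`: the law of `s ↦ min (X s) (Z s)` where `X ∼ μ`
and, independently, the `Z s` are i.i.d. with `P(Z s = true) = 1 - ε`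
(`true` = `+1`/`1`, `false` = `-1`/`0`). -/
noncomputable def minusEps {V : Type*} [DecidableEq V] [Fintype V] (μ : (V → Bool) → ℝ)
    (ε : ℝ) : (V → Bool) → ℝ := fun η =>
  ∑ σ : V → Bool, μ σ *
    ∏ s : V, (if η s then (if σ s then 1 - ε else 0) else (if σ s then ε else 1))

/-!
By Holley's inequality it suffices to check the lattice condition
`μ₁(a) ν(b) ≤ μ₁(a ⊓ b) ν(a ⊔ b)` for `μ₁ = μ^{β,h₁}` and `ν = (μ^{β,h₂})^{(-,ε)}`. For positive
weights this reduces, by lowering the sites where `a = +1` and `b = -1` one at a time, to a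
comparison of the odds of `+1` at a single site `s` when the other spins of the `ν`-configuration
dominate those of the `μ₁`-configuration. Raising the spin at `s` multiplies the Ising weight by
`exp (2βS + 2h)`, where `S ≤ Δ` is the sum of the neighbouring spins; so the `μ₁`-odds are at
most `exp (2βΔ + 2h₁)`, and at most `exp (2(h₁ - h₂)) < 1` times the `μ^{β,h₂}`-odds. The
thinning shrinks the latter odds only by an amount controlled by `ε`, so for `ε` small in terms
of `Δ, β, h₁, h₂` the comparison survives.
-/

open Function Real

section Configurations

variable {V : Type*} [DecidableEq V] [Fintype V]

theorem sum_eq_sum_filter_update (s : V) (F : (V → Bool) → ℝ) :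
    ∑ σ : V → Bool, F σ =
      ∑ σ with σ s = false, (F (update σ s true) + F (update σ s false)) := by
  rw [sum_add_distrib, ← sum_filter_add_sum_filter_not univ (fun σ : V → Bool => σ s = false),
    add_comm]
  congr 1
  · symm
    refine sum_nbij' (update · s true) (update · s false) ?_ ?_ ?_ ?_ ?_ <;>
      intro σ hσ <;> simp_all [update_idem]
  · exact sum_congr rfl fun σ hσ => by rw [update_eq_self_iff.2 (mem_filter.1 hσ).2.symm]

theorem dominates_of_lattice_condition {μ ν : (V → Bool) → ℝ} (hμ : 0 ≤ μ) (hν : 0 ≤ ν)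
    (hμν : ∑ σ, μ σ = ∑ σ, ν σ) (h : ∀ a b, μ a * ν b ≤ μ (a ⊓ b) * ν (a ⊔ b)) :
    Dominates μ ν := by
  intro f hf
  have hbot : ∀ σ, f ⊥ ≤ f σ := fun σ => hf bot_le
  have := holley μ ν (fun σ => f σ - f ⊥) (fun σ => sub_nonneg.2 (hbot σ)) hμ hν
    (fun σ τ hστ => sub_le_sub_right (hf hστ) _) hμν h
  simp only [sub_mul, sum_sub_distrib, ← mul_sum, ← hμν] at this
  simp only [mul_comm (μ _), mul_comm (ν _)]
  linarith

theorem lattice_condition_of_single_site {f g : (V → Bool) → ℝ} (hf : ∀ σ, 0 < f σ)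
    (hg : ∀ σ, 0 < g σ)
    (h : ∀ s ξ ζ, (∀ t ≠ s, ξ t ≤ ζ t) →
      f (update ξ s true) * g (update ζ s false) ≤ f (update ξ s false) * g (update ζ s true))
    (a b : V → Bool) : f a * g b ≤ f (a ⊓ b) * g (a ⊔ b) := by
  obtain ⟨n, hn⟩ : ∃ n, #{t | a t = true ∧ b t = false} = n := ⟨_, rfl⟩
  induction n generalizing a with
  | zero =>
    have hab : a ≤ b := fun t => by
      have := filter_eq_empty_iff.1 (card_eq_zero.1 hn) (mem_univ t)
      revert this; cases a t <;> cases b t <;> simp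
    rw [inf_eq_left.2 hab, sup_eq_right.2 hab]
  | succ n ih =>
    obtain ⟨x, hx⟩ := card_pos.1 (by rw [hn]; exact n.succ_pos)
    obtain ⟨hax, hbx⟩ : a x = true ∧ b x = false := (mem_filter.1 hx).2
    set a' := update a x false
    set c := update (a ⊔ b) x false
    have hinf : a' ⊓ b = a ⊓ b := by
      ext t; by_cases ht : t = x <;> simp_all [a']
    have hsup : a' ⊔ b = c := by
      ext t; by_cases ht : t = x <;> simp_all [a', c]
    have hn' : #{t | a' t = true ∧ b t = false} = n := by
      rw [← Nat.add_right_cancel_iff, ← hn, ← card_erase_add_one hx]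
      congr 2
      ext t; by_cases ht : t = x <;> simp_all [a']
    have hflip := h x a (a ⊔ b) fun t _ => le_sup_left
    have hsup_x : update (a ⊔ b) x true = a ⊔ b := update_eq_self_iff.2 (by simp [hax])
    rw [update_eq_self_iff.2 hax.symm, hsup_x] at hflip
    have hrest := ih a' hn'
    rw [hinf, hsup] at hrest
    refine le_of_mul_le_mul_right ?_ (mul_pos (hf a') (hg c))
    calc f a * g b * (f a' * g c) = (f a * g c) * (f a' * g b) := by ring
      _ ≤ (f a' * g (a ⊔ b)) * (f (a ⊓ b) * g c) :=
        mul_le_mul hflip hrest (mul_pos (hf a') (hg b)).le (mul_pos (hf a') (hg _)).le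
      _ = f (a ⊓ b) * g (a ⊔ b) * (f a' * g c) := by ring

end Configurations

section Thinning

variable {V : Type*} [DecidableEq V] [Fintype V]

/-- `minKernel ε x y` is the probability that `min x Z = y` when `P(Z = true) = 1 - ε`. -/
def minKernel (ε : ℝ) (x y : Bool) : ℝ :=
  if y then (if x then 1 - ε else 0) else (if x then ε else 1)

theorem minusEps_eq (μ : (V → Bool) → ℝ) (ε : ℝ) (η : V → Bool) :
    minusEps μ ε η = ∑ σ : V → Bool, μ σ * ∏ s, minKernel ε (σ s) (η s) := rfl

theorem minKernel_nonneg {ε : ℝ} (hε0 : 0 ≤ ε) (hε1 : ε ≤ 1) (x y : Bool) :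
    0 ≤ minKernel ε x y := by
  cases x <;> cases y <;> simp [minKernel] <;> linarith

theorem minKernel_true_pos {ε : ℝ} (hε0 : 0 < ε) (hε1 : ε < 1) (y : Bool) :
    0 < minKernel ε true y := by
  cases y <;> simp [minKernel] <;> linarith

theorem sum_minKernel (ε : ℝ) (x : Bool) : ∑ y, minKernel ε x y = 1 := by
  cases x <;> simp [minKernel]

theorem prod_minKernel_update (ε : ℝ) (σ η : V → Bool) (s : V) (x y : Bool) :
    ∏ t, minKernel ε (update σ s x t) (update η s y t) =
      minKernel ε x y * ∏ t ∈ univ.erase s, minKernel ε (σ t) (η t) := by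
  rw [← mul_prod_erase univ _ (mem_univ s), update_self, update_self]
  refine congrArg _ (prod_congr rfl fun t ht => ?_)
  rw [update_of_ne (ne_of_mem_erase ht), update_of_ne (ne_of_mem_erase ht)]

theorem sum_minusEps (μ : (V → Bool) → ℝ) (ε : ℝ) :
    ∑ η, minusEps μ ε η = ∑ σ, μ σ := by
  simp only [minusEps_eq]
  rw [sum_comm]
  simp_rw [← mul_sum, ← Fintype.prod_sum, sum_minKernel, prod_const_one, mul_one]

theorem minusEps_pos {μ : (V → Bool) → ℝ} {ε : ℝ} (hμ : ∀ σ, 0 < μ σ) (hε0 : 0 < ε)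
    (hε1 : ε < 1) (η : V → Bool) : 0 < minusEps μ ε η :=
  sum_pos' (fun σ _ => mul_nonneg (hμ σ).le <| prod_nonneg fun _ _ =>
      minKernel_nonneg hε0.le hε1.le _ _)
    ⟨⊤, mem_univ _, mul_pos (hμ ⊤) <| prod_pos fun _ _ => minKernel_true_pos hε0 hε1 _⟩

theorem minusEps_single_site {f μ : (V → Bool) → ℝ} {ε : ℝ} (hε0 : 0 ≤ ε) (hε1 : ε ≤ 1)
    {s : V} {ξ ζ : V → Bool} (hξζ : ∀ t ≠ s, ξ t ≤ ζ t)
    (h : ∀ σ : V → Bool, (∀ t ≠ s, ξ t ≤ σ t) →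
      f (update ξ s true) * (ε * μ (update σ s true) + μ (update σ s false)) ≤
        (1 - ε) * f (update ξ s false) * μ (update σ s true)) :
    f (update ξ s true) * minusEps μ ε (update ζ s false) ≤
      f (update ξ s false) * minusEps μ ε (update ζ s true) := by
  simp only [minusEps_eq, mul_sum]
  rw [sum_eq_sum_filter_update s, sum_eq_sum_filter_update s]
  refine sum_le_sum fun σ _ => ?_
  simp only [prod_minKernel_update]
  set Q := ∏ t ∈ univ.erase s, minKernel ε (σ t) (ζ t)
  simp only [minKernel, if_true, if_false, Bool.false_eq_true]
  -- `Q = 0` unless `σ` dominates `ζ` off `s`, since taking `min` with the noise only lowers spins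
  by_cases hσ : ∀ t ≠ s, ζ t ≤ σ t
  · have hQ : 0 ≤ Q := prod_nonneg fun _ _ => minKernel_nonneg hε0 hε1 _ _
    have := mul_le_mul_of_nonneg_right (h σ fun t ht => (hξζ t ht).trans (hσ t ht)) hQ
    linarith
  · obtain ⟨t, hts, hlt⟩ : ∃ t ≠ s, σ t < ζ t := by simpa using hσ
    have hQ : Q = 0 := prod_eq_zero (mem_erase.2 ⟨hts, mem_univ t⟩) (by
      rw [Bool.lt_iff] at hlt
      simp [minKernel, hlt.1, hlt.2])
    simp [hQ]

end Thinning

section Ising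

variable {V : Type*} [Fintype V] (G : SimpleGraph V) [DecidableRel G.Adj]

theorem spin_mono : Monotone spin := by
  intro a b hab
  cases a <;> cases b <;> simp_all [spin, Bool.le_iff_imp]

theorem spin_le_one (b : Bool) : spin b ≤ 1 := by
  cases b <;> norm_num [spin]

theorem sum_neighbor_spin_le_degree (s : V) (σ : V → Bool) :
    ∑ t ∈ G.neighborFinset s, spin (σ t) ≤ G.degree s := by
  calc ∑ t ∈ G.neighborFinset s, spin (σ t) ≤ ∑ _t ∈ G.neighborFinset s, (1 : ℝ) :=
        sum_le_sum fun t _ => spin_le_one _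
    _ = G.degree s := by simp

theorem sum_neighbor_spin_mono {s : V} {ξ σ : V → Bool} (hξσ : ∀ t ≠ s, ξ t ≤ σ t) :
    ∑ t ∈ G.neighborFinset s, spin (ξ t) ≤ ∑ t ∈ G.neighborFinset s, spin (σ t) :=
  sum_le_sum fun t ht => spin_mono <| hξσ t (G.ne_of_adj ((G.mem_neighborFinset s t).1 ht)).symm

variable [DecidableEq V]

theorem sum_edgeTerm_update_sub (s : V) (σ : V → Bool) :
    ∑ e ∈ G.edgeFinset, (edgeTerm (update σ s true) e - edgeTerm (update σ s false) e) =
      2 * ∑ t ∈ G.neighborFinset s, spin (σ t) := by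
  have off : ∀ e ∈ {e ∈ G.edgeFinset | s ∉ e},
      edgeTerm (update σ s true) e - edgeTerm (update σ s false) e = 0 := by
    intro e he
    induction e with
    | h a b =>
      obtain ⟨has, hbs⟩ : a ≠ s ∧ b ≠ s := by simpa [eq_comm] using (mem_filter.1 he).2
      simp [edgeTerm, update_of_ne has, update_of_ne hbs]
  rw [← sum_filter_add_sum_filter_not _ (s ∈ ·), sum_eq_zero off, add_zero, mul_sum]
  symm
  refine sum_bij (fun t _ => s(s, t)) (fun t ht => ?_) (fun t _ t' _ h => Sym2.congr_right.1 h)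
    (fun e he => ?_) (fun t ht => ?_)
  · simpa [mem_filter] using ht
  · obtain ⟨he, hse⟩ := mem_filter.1 he
    obtain ⟨t, rfl⟩ := Sym2.mem_iff_exists.1 hse
    exact ⟨t, by simpa using he, rfl⟩
  · have hts : t ≠ s := (G.ne_of_adj ((G.mem_neighborFinset s t).1 ht)).symm
    simp only [edgeTerm, Sym2.lift_mk, update_self, update_of_ne hts]
    simp only [spin, if_true, Bool.false_eq_true, if_false]
    ring

theorem isingH_update_false_sub_update_true (β : ℝ) (h : V → ℝ) (s : V) (σ : V → Bool) :
    isingH G β h (update σ s false) - isingH G β h (update σ s true) =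
      2 * β * ∑ t ∈ G.neighborFinset s, spin (σ t) + 2 * h s := by
  have hfield : ∑ t, h t * spin (update σ s true t) - ∑ t, h t * spin (update σ s false t) =
      2 * h s := by
    rw [← sum_sub_distrib, sum_eq_single s (fun t _ hts => by simp [update_of_ne hts])
      (by simp)]
    simp [spin]
    ring
  have hedge := sum_edgeTerm_update_sub G s σ
  rw [sum_sub_distrib] at hedge
  unfold isingH
  linear_combination β * hedge + hfield

theorem isingWeight_update_true (β : ℝ) (h : V → ℝ) (s : V) (σ : V → Bool) :
    isingWeight G β h (update σ s true) =
      exp (2 * β * ∑ t ∈ G.neighborFinset s, spin (σ t) + 2 * h s) *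
        isingWeight G β h (update σ s false) := by
  unfold isingWeight
  rw [← mul_div_assoc, ← exp_add, ← isingH_update_false_sub_update_true]
  ring_nf

theorem isingWeight_pos (β : ℝ) (h : V → ℝ) (σ : V → Bool) : 0 < isingWeight G β h σ :=
  div_pos (exp_pos _) (sum_pos (fun _ _ => exp_pos _) univ_nonempty)

theorem sum_isingWeight (β : ℝ) (h : V → ℝ) : ∑ σ, isingWeight G β h σ = 1 := by
  unfold isingWeight
  rw [← sum_div, div_self (sum_pos (fun _ _ => exp_pos _) univ_nonempty).ne']

end Ising

/-- `C = exp (2βΔ + 2h₁)` bounds the odds of `+1` at a site under `μ^{β,h₁}`, and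
`r = exp (2(h₁ - h₂))` bounds their ratio to the odds under `μ^{β,h₂}`; the noise level solves
`(C + 1) ε = 1 - r`. -/
noncomputable def isingNoise (Δ : ℕ) (β h₁ h₂ : ℝ) : ℝ :=
  (1 - exp (2 * (h₁ - h₂))) / (exp (2 * β * Δ + 2 * h₁) + 1)

theorem add_one_mul_isingNoise (Δ : ℕ) (β h₁ h₂ : ℝ) :
    (exp (2 * β * Δ + 2 * h₁) + 1) * isingNoise Δ β h₁ h₂ = 1 - exp (2 * (h₁ - h₂)) :=
  mul_div_cancel₀ _ (by positivity)

theorem isingNoise_nonneg {Δ : ℕ} {β h₁ h₂ : ℝ} (h12 : h₁ ≤ h₂) : 0 ≤ isingNoise Δ β h₁ h₂ :=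
  div_nonneg (sub_nonneg.2 (exp_le_one_iff.2 (by linarith))) (by positivity)

theorem isingNoise_mem_Ioo {Δ : ℕ} {β h₁ h₂ : ℝ} (h12 : h₁ < h₂) :
    isingNoise Δ β h₁ h₂ ∈ Set.Ioo 0 1 := by
  have hr := exp_pos (2 * (h₁ - h₂))
  have hC := exp_pos (2 * β * Δ + 2 * h₁)
  exact ⟨div_pos (sub_pos.2 (exp_lt_one_iff.2 (by linarith))) (by positivity),
    (div_lt_one (by positivity)).2 (by linarith)⟩

theorem exp_mul_add_one_le {x₁ x₂ C r ε : ℝ} (hε : 0 ≤ ε) (hC : exp x₁ ≤ C)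
    (hr : exp (x₁ - x₂) ≤ r) (hCr : (C + 1) * ε ≤ 1 - r) :
    exp x₁ * (ε * exp x₂ + 1) ≤ (1 - ε) * exp x₂ := by
  have hsplit : exp x₁ = exp (x₁ - x₂) * exp x₂ := by rw [← exp_add, sub_add_cancel]
  calc exp x₁ * (ε * exp x₂ + 1) = (exp x₁ * ε + exp (x₁ - x₂)) * exp x₂ := by
        rw [hsplit]; ring
    _ ≤ (C * ε + r) * exp x₂ := by gcongr
    _ ≤ (1 - ε) * exp x₂ := by gcongr; linarith

theorem isingWeight_single_site {V : Type*} [DecidableEq V] [Fintype V] (G : SimpleGraph V)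
    [DecidableRel G.Adj] {Δ : ℕ} {β h₁ h₂ : ℝ} (hβ : 0 ≤ β) (h12 : h₁ ≤ h₂)
    (hdeg : ∀ v, G.degree v ≤ Δ) {s : V} {ξ σ : V → Bool} (hξσ : ∀ t ≠ s, ξ t ≤ σ t) :
    isingWeight G β (fun _ => h₁) (update ξ s true) *
        (isingNoise Δ β h₁ h₂ * isingWeight G β (fun _ => h₂) (update σ s true) +
          isingWeight G β (fun _ => h₂) (update σ s false)) ≤
      (1 - isingNoise Δ β h₁ h₂) * isingWeight G β (fun _ => h₁) (update ξ s false) *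
        isingWeight G β (fun _ => h₂) (update σ s true) := by
  set ε := isingNoise Δ β h₁ h₂
  set S₁ := ∑ t ∈ G.neighborFinset s, spin (ξ t)
  set S₂ := ∑ t ∈ G.neighborFinset s, spin (σ t)
  have hS₁ : S₁ ≤ Δ := (sum_neighbor_spin_le_degree G s ξ).trans (by exact_mod_cast hdeg s)
  have hS : S₁ ≤ S₂ := sum_neighbor_spin_mono G hξσ
  have key : exp (2 * β * S₁ + 2 * h₁) * (ε * exp (2 * β * S₂ + 2 * h₂) + 1) ≤
      (1 - ε) * exp (2 * β * S₂ + 2 * h₂) :=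
    exp_mul_add_one_le (isingNoise_nonneg h12) (exp_le_exp.2 (by nlinarith))
      (exp_le_exp.2 (by nlinarith)) (add_one_mul_isingNoise Δ β h₁ h₂).le
  rw [isingWeight_update_true G β _ s ξ, isingWeight_update_true G β _ s σ]
  have hAB := mul_pos (isingWeight_pos G β (fun _ => h₁) (update ξ s false))
    (isingWeight_pos G β (fun _ => h₂) (update σ s false))
  have := mul_le_mul_of_nonneg_left key hAB.le
  linarith

theorem ising_downward_movable (Δ : ℕ) (β : ℝ) (hβ : 0 ≤ β) (h₁ h₂ : ℝ) (h12 : h₁ < h₂) :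
    ∃ ε ∈ Set.Ioo (0 : ℝ) 1, ∀ (V : Type) [DecidableEq V] [Fintype V]
      (G : SimpleGraph V) [DecidableRel G.Adj], (∀ v : V, G.degree v ≤ Δ) →
        Dominates (isingWeight G β fun _ => h₁) (minusEps (isingWeight G β fun _ => h₂) ε) := by
  obtain ⟨hε0, hε1⟩ := isingNoise_mem_Ioo (Δ := Δ) (β := β) h12
  refine ⟨isingNoise Δ β h₁ h₂, ⟨hε0, hε1⟩, fun V _ _ G _ hdeg => ?_⟩
  have hμ := isingWeight_pos G β fun _ => h₁
  have hν := minusEps_pos (isingWeight_pos G β fun _ => h₂) hε0 hε1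
  refine dominates_of_lattice_condition (fun σ => (hμ σ).le) (fun η => (hν η).le)
    (by rw [sum_minusEps, sum_isingWeight, sum_isingWeight]) ?_
  exact lattice_condition_of_single_site hμ hν fun s ξ ζ hξζ =>
    minusEps_single_site hε0.le hε1.le hξζ fun σ hξσ =>
      isingWeight_single_site G hβ h12.le hdeg hξσ
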